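/- arXiv:2001.08368 — 17 statements merged into one kernel-verified Lean document; each statement's English description precedes it below -/
import Mathlib

section
/- Let R be a (not necessarily unital) associative ring and let a, b, c ∈ R. If x and y are both annihilator (b,c)-inverses of a, then x = y; that is, a has at most one annihilator (b,c)-inverse. -/
/-- `x` is an annihilator `(b,c)`-inverse of `a`. -/
def IsAnnBCInv {R : Type*} [NonUnitalRing R] (a b c x : R) : Prop :=
  x * a * x = x ∧ x * a * b = b ∧ c * a * x = c ∧
    (∀ r : R, r * b = 0 → r * x = 0) ∧ (∀ r : R, c * r = 0 → x * r = 0)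

/-! If `x` and `y` are annihilator `(b,c)`-inverses of `a`, then `x a - y a` kills `b` on the
right, hence kills `x`, so `x = y a x`; dually `a x - a y` is killed by `c` on the left, hence by
`y`, so `y a x = y`. -/

namespace IsAnnBCInv

variable {R : Type*} [NonUnitalRing R] {a b c x y : R}

theorem mul_mul_eq_left (hx : IsAnnBCInv a b c x) (hyb : y * a * b = b) : y * a * x = x := by
  obtain ⟨hxax, hxab, -, hannb, -⟩ := hx
  have hb : (x * a - y * a) * b = 0 := by rw [sub_mul, hxab, hyb, sub_self]
  have hx' : x * a * x - y * a * x = 0 := by rw [← sub_mul]; exact hannb _ hb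
  rw [← sub_eq_zero.mp hx', hxax]

theorem mul_mul_eq_right (hy : IsAnnBCInv a b c y) (hcx : c * a * x = c) : y * a * x = y := by
  obtain ⟨hyay, -, hcay, -, hannc⟩ := hy
  have hc : c * (a * x - a * y) = 0 := by
    rw [mul_sub, ← mul_assoc, ← mul_assoc, hcx, hcay, sub_self]
  have hy' : y * (a * x) - y * (a * y) = 0 := by rw [← mul_sub]; exact hannc _ hc
  rw [mul_assoc, sub_eq_zero.mp hy', ← mul_assoc, hyay]

end IsAnnBCInv

theorem ann_bc_inverse_unique {R : Type*} [NonUnitalRing R] (a b c x y : R)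
    (hx : IsAnnBCInv a b c x) (hy : IsAnnBCInv a b c y) : x = y :=
  calc x = y * a * x := (hx.mul_mul_eq_left hy.2.1).symm
    _ = y := hy.mul_mul_eq_right hx.2.2.1
end

section
/- Let R be a (not necessarily unital) associative ring with involution * and let a ∈ R. Then a has a Moore–Penrose inverse if and only if a has an annihilator (a*,a*)-inverse; moreover, if x is a Moore–Penrose inverse of a and y is an annihilator (a*,a*)-inverse of a, then x = y. -/
/-- `x` is a Moore–Penrose inverse of `a` in a ring with involution. -/
def IsMPInv {R : Type*} [NonUnitalRing R] [StarRing R] (a x : R) : Prop :=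
  a * x * a = a ∧ x * a * x = x ∧ star (a * x) = a * x ∧ star (x * a) = x * a

section

variable {R : Type*} [NonUnitalRing R]

theorem IsAnnBCInv.unique {a b c x y : R} (hx : IsAnnBCInv a b c x) (hy : IsAnnBCInv a b c y) :
    x = y := by
  obtain ⟨hxax, hxb, hcx, -, hx_right⟩ := hx
  obtain ⟨hyay, hyb, hcy, hy_left, -⟩ := hy
  have hxay : x * a * y = x := by
    have h : c * (a * x - a * y) = 0 := by
      rw [mul_sub, ← mul_assoc, ← mul_assoc, hcx, hcy, sub_self]
    have := hx_right _ h
    rw [mul_sub, sub_eq_zero, ← mul_assoc, ← mul_assoc, hxax] at this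
    exact this.symm
  have hyax : x * a * y = y := by
    have h : (x * a - y * a) * b = 0 := by
      rw [sub_mul, hxb, hyb, sub_self]
    have := hy_left _ h
    rwa [sub_mul, sub_eq_zero, hyay] at this
  rw [← hxay, hyax]

variable [StarRing R] {a : R}

theorem IsMPInv.isAnnBCInv_star_star {x : R} (hx : IsMPInv a x) :
    IsAnnBCInv a (star a) (star a) x := by
  obtain ⟨haxa, hxax, hax, hxa⟩ := hx
  have hx_eq_left : x = star a * (star x * x) := by
    conv_lhs => rw [← hxax, ← hxa, star_mul, mul_assoc]
  have hx_eq_right : x = x * star x * star a := by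
    conv_lhs => rw [← hxax, mul_assoc, ← hax, star_mul, ← mul_assoc]
  refine ⟨hxax, ?_, ?_, fun r hr => ?_, fun r hr => ?_⟩
  · calc x * a * star a = star (a * (x * a)) := by rw [star_mul, hxa]
      _ = star a := by rw [← mul_assoc, haxa]
  · calc star a * a * x = star (a * x * a) := by rw [star_mul, hax, mul_assoc]
      _ = star a := by rw [haxa]
  · rw [hx_eq_left, ← mul_assoc, hr, zero_mul]
  · rw [hx_eq_right, mul_assoc, hr, mul_zero]

theorem isMPInv_of_outer_star_inverse {y : R} (hyay : y * a * y = y)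
    (hl : y * a * star a = star a) (hr : star a * a * y = star a) : IsMPInv a y := by
  have hr' : star y * (star a * a) = a := by
    simpa only [star_mul, star_star, mul_assoc] using congrArg star hr
  have hl' : a * (star a * star y) = a := by
    simpa only [star_mul, star_star, mul_assoc] using congrArg star hl
  have hay : a * y = star y * star a := by
    calc a * y = star y * (star a * a) * y := by rw [hr']
      _ = star y * star a := by rw [mul_assoc, hr]
  have hya : y * a = star a * star y := by
    calc y * a = y * a * star a * star y := by rw [mul_assoc (y * a), mul_assoc y, hl']
      _ = star a * star y := by rw [hl]
  refine ⟨?_, hyay, ?_, ?_⟩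
  · rw [hay, mul_assoc, hr']
  · rw [star_mul, hay]
  · rw [star_mul, hya]

end

theorem mp_iff_ann_star_star {R : Type*} [NonUnitalRing R] [StarRing R] (a : R) :
    ((∃ x : R, IsMPInv a x) ↔ (∃ y : R, IsAnnBCInv a (star a) (star a) y)) ∧
      (∀ x y : R, IsMPInv a x → IsAnnBCInv a (star a) (star a) y → x = y) :=
  ⟨⟨fun ⟨x, hx⟩ => ⟨x, hx.isAnnBCInv_star_star⟩,
      fun ⟨y, hyay, hl, hr, _⟩ => ⟨y, isMPInv_of_outer_star_inverse hyay hl hr⟩⟩,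
    fun _ _ hx hy => hx.isAnnBCInv_star_star.unique hy⟩
end

section
/- Let R be a (not necessarily unital) associative ring and let a, b, c ∈ R. If x_l is a left annihilator (b,c)-inverse of a and x_r is a right annihilator (b,c)-inverse of a, then x_l·a·x_r is an annihilator (b,c)-inverse of a. -/
/-- `x` is a left annihilator `(b,c)`-inverse of `a`. -/
def IsLAnnBCInv {R : Type*} [NonUnitalRing R] (a b c x : R) : Prop :=
  x * a * b = b ∧ (∀ r : R, c * r = 0 → x * r = 0)

/-- `y` is a right annihilator `(b,c)`-inverse of `a`. -/
def IsRAnnBCInv {R : Type*} [NonUnitalRing R] (a b c y : R) : Prop :=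
  c * a * y = c ∧ (∀ r : R, r * b = 0 → r * y = 0)

/-!
The annihilator inclusions are cancellation laws: `∘b ⊆ ∘xr` turns `u * b = v * b` into
`u * xr = v * xr`, and `c∘ ⊆ xl∘` turns `c * u = c * v` into `xl * u = xl * v`. Since
`xl * a * b = b` and `c * a * xr = c`, every identity required of `xl * a * xr` reduces, by one
such cancellation, to an identity that holds after multiplying by `b` on the right or by `c` on
the left.
-/

section AnnihilatorCancel

variable {R : Type*} [NonUnitalRing R]

theorem mul_eq_mul_of_lann_subset {b y u v : R} (hy : ∀ r : R, r * b = 0 → r * y = 0)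
    (huv : u * b = v * b) : u * y = v * y :=
  sub_eq_zero.mp <| by rw [← sub_mul]; exact hy _ (by rw [sub_mul, huv, sub_self])

theorem mul_eq_mul_of_rann_subset {c x u v : R} (hx : ∀ r : R, c * r = 0 → x * r = 0)
    (huv : c * u = c * v) : x * u = x * v :=
  sub_eq_zero.mp <| by rw [← mul_sub]; exact hx _ (by rw [mul_sub, huv, sub_self])

end AnnihilatorCancel

theorem lann_rann_imp_ann {R : Type*} [NonUnitalRing R] (a b c xl xr : R)
    (hl : IsLAnnBCInv a b c xl) (hr : IsRAnnBCInv a b c xr) :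
    IsAnnBCInv a b c (xl * a * xr) := by
  obtain ⟨hxl_b, hxl_ann⟩ := hl
  obtain ⟨hc_xr, hxr_ann⟩ := hr
  have hx_b : xl * a * xr * a * b = b := calc
    xl * a * xr * a * b = xl * (a * xr * a * b) := by simp only [mul_assoc]
    _ = xl * (a * b) := mul_eq_mul_of_rann_subset hxl_ann <| by simp only [← mul_assoc, hc_xr]
    _ = b := by rw [← mul_assoc, hxl_b]
  have hc_x : c * a * (xl * a * xr) = c := calc
    c * a * (xl * a * xr) = c * a * xl * a * xr := by simp only [mul_assoc]
    _ = c * a * xr := mul_eq_mul_of_lann_subset hxr_ann <| by simp only [mul_assoc, hxl_b]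
    _ = c := hc_xr
  refine ⟨?_, hx_b, hc_x, fun r hrb => ?_, fun r hcr => ?_⟩
  · calc xl * a * xr * a * (xl * a * xr) = xl * a * xr * a * xl * a * xr := by simp only [mul_assoc]
      _ = xl * a * xr := mul_eq_mul_of_lann_subset hxr_ann <| by
        rw [mul_assoc _ a b, mul_assoc _ xl, ← mul_assoc xl, hxl_b, hx_b]
  · rw [← mul_assoc, ← mul_assoc]
    exact hxr_ann _ (by rw [mul_assoc, mul_assoc, ← mul_assoc xl, hxl_b, hrb])
  · rw [mul_assoc, mul_assoc]
    exact hxl_ann _ (by rw [← mul_assoc, ← mul_assoc, hc_xr, hcr])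
end

section
/- Let R be a (not necessarily unital) associative ring and let a, b, c ∈ R. Suppose x is an annihilator (b,c)-inverse of a, x_l is a left annihilator (b,c)-inverse of a, and x_r is a right annihilator (b,c)-inverse of a. Then x = x_l if and only if x_l ∈ R·x_r, i.e. there exists t ∈ R with x_l = t·x_r. -/
section Cancellation

variable {R : Type*} [NonUnitalRing R] {b c y u v : R}

theorem mul_eq_mul_of_leftAnn_subset (h : ∀ r : R, r * b = 0 → r * y = 0)
    (huv : u * b = v * b) : u * y = v * y := by
  rw [← sub_eq_zero, ← sub_mul] at huv ⊢
  exact h _ huv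

theorem mul_eq_mul_of_rightAnn_subset (h : ∀ r : R, c * r = 0 → y * r = 0)
    (huv : c * u = c * v) : y * u = y * v := by
  rw [← sub_eq_zero, ← mul_sub] at huv ⊢
  exact h _ huv

end Cancellation

namespace IsAnnBCInv

variable {R : Type*} [NonUnitalRing R] {a b c x y t xl xr : R}

theorem self_mul_mul_eq_self (hx : IsAnnBCInv a b c x) (hy : c * a * y = c) :
    x * a * y = x := by
  obtain ⟨hxax, -, hcax, -, hann⟩ := hx
  have h : x * (a * y) = x * (a * x) :=
    mul_eq_mul_of_rightAnn_subset hann (by rw [← mul_assoc, ← mul_assoc, hy, hcax])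
  rwa [← mul_assoc, ← mul_assoc, hxax] at h

theorem mul_mul_self_eq_self (hx : IsAnnBCInv a b c x) (hy : y * a * b = b) :
    y * a * x = x := by
  obtain ⟨hxax, hxab, -, hann, -⟩ := hx
  rw [mul_eq_mul_of_leftAnn_subset hann (hy.trans hxab.symm), hxax]

theorem mul_eq_of_eq_mul (hx : IsAnnBCInv a b c x) (hr : IsRAnnBCInv a b c xr)
    (ht : xl = t * xr) : t * x = xl := by
  have hb : t * x * a * b = t * b := by rw [mul_assoc (t * x), mul_assoc t, ← mul_assoc x, hx.2.1]
  calc t * x = t * (x * a * xr) := by rw [hx.self_mul_mul_eq_self hr.1]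
    _ = t * x * a * xr := by simp only [mul_assoc]
    _ = t * xr := mul_eq_mul_of_leftAnn_subset hr.2 hb
    _ = xl := ht.symm

end IsAnnBCInv

theorem eq_lann_iff_mem {R : Type*} [NonUnitalRing R] (a b c x xl xr : R)
    (hx : IsAnnBCInv a b c x) (hl : IsLAnnBCInv a b c xl) (hr : IsRAnnBCInv a b c xr) :
    x = xl ↔ ∃ t : R, xl = t * xr := by
  constructor
  · rintro rfl
    exact ⟨x * a, (hx.self_mul_mul_eq_self hr.1).symm⟩
  · rintro ⟨t, ht⟩
    have htx : t * x = xl := hx.mul_eq_of_eq_mul hr ht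
    calc x = xl * a * x := (hx.mul_mul_self_eq_self hl.1).symm
      _ = t * x * a * x := by rw [htx]
      _ = t * x := by rw [mul_assoc t, mul_assoc t, hx.1]
      _ = xl := htx
end

section
/- Let R be a (not necessarily unital) associative ring and let a, b, c ∈ R. If x ∈ R satisfies x·a·b = b, c·a·x = c, ∘b ⊆ ∘x, and c∘ ⊆ x∘, then x·a·x is an annihilator (b,c)-inverse of a. In this situation, x·a·x = x if and only if x ∈ R·x, i.e. there exists t ∈ R with x = t·x. -/
section

variable {R : Type*} [NonUnitalRing R] {a b x : R}

theorem mul_mul_mul_eq_of_leftAnn_subset (hb : x * a * b = b)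
    (hann : ∀ r : R, r * b = 0 → r * x = 0) (y : R) : y * x * a * x = y * x := by
  have hyb : (y * x * a - y) * b = 0 := by
    rw [sub_mul, mul_assoc (y * x) a b, mul_assoc y x (a * b), ← mul_assoc x a b, hb, sub_self]
  simpa only [sub_mul, sub_eq_zero] using hann _ hyb

theorem mul_mul_eq_self_iff_of_leftAnn_subset (hb : x * a * b = b)
    (hann : ∀ r : R, r * b = 0 → r * x = 0) : x * a * x = x ↔ ∃ t : R, x = t * x := by
  refine ⟨fun h => ⟨x * a, h.symm⟩, ?_⟩
  rintro ⟨t, ht⟩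
  calc x * a * x = t * x * a * x := by rw [← ht]
    _ = x := by rw [mul_mul_mul_eq_of_leftAnn_subset hb hann t, ← ht]

end

theorem xax_is_ann_bc_inv {R : Type*} [NonUnitalRing R] (a b c x : R)
    (h1 : x * a * b = b) (h2 : c * a * x = c)
    (h3 : ∀ r : R, r * b = 0 → r * x = 0) (h4 : ∀ r : R, c * r = 0 → x * r = 0) :
    IsAnnBCInv a b c (x * a * x) ∧ (x * a * x = x ↔ ∃ t : R, x = t * x) := by
  have hxax := mul_mul_mul_eq_of_leftAnn_subset h1 h3
  refine ⟨⟨?_, ?_, ?_, ?_, ?_⟩, mul_mul_eq_self_iff_of_leftAnn_subset h1 h3⟩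
  · calc x * a * x * a * (x * a * x) = x * a * x * a * x * a * x := by noncomm_ring
      _ = x * a * x := by rw [hxax, hxax]
  · calc x * a * x * a * b = x * a * (x * a * b) := by noncomm_ring
      _ = b := by rw [h1, h1]
  · calc c * a * (x * a * x) = c * a * x * a * x := by noncomm_ring
      _ = c := by rw [h2, h2]
  · intro r hr
    rw [← mul_assoc, ← mul_assoc, h3 r hr, zero_mul, zero_mul]
  · intro r hr
    rw [mul_assoc, h4 r hr, mul_zero]
end

section
/- Let R be a (not necessarily unital) associative ring and let a, b, c ∈ R. Suppose a has an annihilator (b,c)-inverse and x_l is a left annihilator (b,c)-inverse of a. Then x_l·a·x_l is an annihilator (b,c)-inverse of a if and only if c·a·x_l = c. -/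
/-! Annihilator inclusions let a factor `z a` or `a w` be cancelled: `∘b ⊆ ∘y` and `z a b = b`
give `r z a y = r y`, while `c∘ ⊆ z∘` and `c a w = c` give `z a w t = z t`. For `y = xl a xl`
the first rule turns `c a y = c` into `c a xl = c a y a xl = c a xl a y = c`. Conversely, with
`c a xl = c` the second rule for `z = w = xl` gives every property of `y` except `∘b ⊆ ∘y`;
there `r b = 0` forces `r x = 0` for the annihilator inverse `x`, and
`r y = r xl a x a xl = r x a xl = 0`. -/

section

variable {R : Type*} [NonUnitalRing R] {a b c : R}

theorem mul_mul_mul_eq_mul_of_leftAnn {y z : R} (hy : ∀ r : R, r * b = 0 → r * y = 0)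
    (hz : z * a * b = b) (r : R) : r * z * a * y = r * y := by
  have hb : (r * z * a - r) * b = 0 := by
    rw [sub_mul, sub_eq_zero, mul_assoc, mul_assoc, ← mul_assoc z, hz]
  simpa only [sub_mul, sub_eq_zero] using hy _ hb

theorem mul_mul_mul_eq_mul_of_rightAnn {z w : R} (hz : ∀ r : R, c * r = 0 → z * r = 0)
    (hw : c * a * w = c) (t : R) : z * a * w * t = z * t := by
  have hc : c * (a * w * t - t) = 0 := by
    rw [mul_sub, sub_eq_zero, ← mul_assoc, ← mul_assoc, hw]
  simpa only [mul_sub, sub_eq_zero, mul_assoc] using hz _ hc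

namespace IsLAnnBCInv

variable {xl : R}

theorem mul_mul_eq_of_isAnnBCInv (hl : IsLAnnBCInv a b c xl)
    (hy : IsAnnBCInv a b c (xl * a * xl)) : c * a * xl = c := by
  obtain ⟨-, -, hcy, hby, -⟩ := hy
  calc c * a * xl = c * a * (xl * a * xl) * a * xl := by rw [hcy]
    _ = c * a * xl * a * (xl * a * xl) := by simp only [mul_assoc]
    _ = c := by rw [mul_mul_mul_eq_mul_of_leftAnn hby hl.1, hcy]

theorem isAnnBCInv_mul_mul {x : R} (hl : IsLAnnBCInv a b c xl) (hx : IsAnnBCInv a b c x)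
    (hc : c * a * xl = c) : IsAnnBCInv a b c (xl * a * xl) := by
  obtain ⟨hxlb, hxlc⟩ := hl
  have hxl : ∀ t, xl * a * xl * t = xl * t := mul_mul_mul_eq_mul_of_rightAnn hxlc hc
  refine ⟨?_, ?_, ?_, fun r hr => ?_, fun r hr => ?_⟩
  · simp only [← mul_assoc]
    rw [hxl, hxl]
  · rw [hxl, hxlb]
  · simp only [← mul_assoc]
    rw [hc, hc]
  · obtain ⟨-, -, hcx, hbx, -⟩ := hx
    calc r * (xl * a * xl) = r * (xl * a * x * (a * xl)) := by
          rw [mul_mul_mul_eq_mul_of_rightAnn hxlc hcx, mul_assoc xl]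
      _ = r * xl * a * x * (a * xl) := by simp only [mul_assoc]
      _ = 0 := by rw [mul_mul_mul_eq_mul_of_leftAnn hbx hxlb, hbx r hr, zero_mul]
  · rw [mul_assoc, hxlc r hr, mul_zero]

end IsLAnnBCInv

end

theorem xlaxl_ann_iff {R : Type*} [NonUnitalRing R] (a b c xl : R)
    (h : ∃ x : R, IsAnnBCInv a b c x) (hl : IsLAnnBCInv a b c xl) :
    IsAnnBCInv a b c (xl * a * xl) ↔ c * a * xl = c := by
  obtain ⟨x, hx⟩ := h
  exact ⟨hl.mul_mul_eq_of_isAnnBCInv, hl.isAnnBCInv_mul_mul hx⟩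
end

section
/- Let R be a (not necessarily unital) associative ring that is left faithful, i.e. the only element x ∈ R with x·r = 0 for all r ∈ R is x = 0. Let a, b, c ∈ R and suppose x is an annihilator (b,c)-inverse of a. Then every left annihilator (b,c)-inverse of a is equal to x; in particular, a has a unique left annihilator (b,c)-inverse. -/
/-!
If `y` is a left annihilator `(b,c)`-inverse of `a`, then `(y a - x a) b = 0`, so `∘b ⊆ ∘x`
gives `y a x = x a x = x`. On the other side `c (a x r - r) = 0`, so `c∘ ⊆ y∘` gives
`y r = y a x r = x r` for every `r`, and left faithfulness yields `y = x`.
-/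

section

variable {R : Type*} [NonUnitalRing R]

theorem eq_of_forall_mul_eq_of_leftFaithful
    (faithful : ∀ x : R, (∀ r : R, x * r = 0) → x = 0) {x y : R}
    (h : ∀ r : R, x * r = y * r) : x = y :=
  sub_eq_zero.mp <| faithful _ fun r => by rw [sub_mul, h, sub_self]

theorem mul_mul_mul_eq_of_rightAnn_subset {a c x y : R} (hcax : c * a * x = c)
    (hy : ∀ r : R, c * r = 0 → y * r = 0) (r : R) : y * a * x * r = y * r := by
  have hc : c * (a * x * r - r) = 0 := by
    rw [mul_sub, ← mul_assoc, ← mul_assoc, hcax, sub_self]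
  have := hy _ hc
  rwa [mul_sub, sub_eq_zero, ← mul_assoc, ← mul_assoc] at this

theorem IsLAnnBCInv.mul_mul_eq {a b c x y : R} (hx : IsAnnBCInv a b c x)
    (hy : IsLAnnBCInv a b c y) : y * a * x = x := by
  obtain ⟨hxax, hxab, -, hxb, -⟩ := hx
  have hb : (y * a - x * a) * b = 0 := by rw [sub_mul, hy.1, hxab, sub_self]
  have := hxb _ hb
  rwa [sub_mul, sub_eq_zero, hxax] at this

end

theorem lann_unique_of_leftFaithful {R : Type*} [NonUnitalRing R]
    (faithful : ∀ x : R, (∀ r : R, x * r = 0) → x = 0)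
    (a b c x : R) (hx : IsAnnBCInv a b c x) :
    ∀ xl : R, IsLAnnBCInv a b c xl → xl = x := by
  intro xl hxl
  refine eq_of_forall_mul_eq_of_leftFaithful faithful fun r => ?_
  rw [← mul_mul_mul_eq_of_rightAnn_subset hx.2.2.1 hxl.2 r, hxl.mul_mul_eq hx]
end

section
/- Let R be a (not necessarily unital) associative ring and let a, b, c ∈ R. Suppose x_l is a left annihilator (b,c)-inverse of a, and suppose t ∈ R is a Drazin inverse of x_l·a. Then t·x_l is a regular left annihilator (b,c)-inverse of a, i.e. (t·x_l)·a·b = b, c∘ ⊆ (t·x_l)∘, and (t·x_l)·a·(t·x_l) = t·x_l. -/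
/-- `pw a n = a ^ (n + 1)`, powers in a non-unital ring. -/
def pw {R : Type*} [NonUnitalRing R] (a : R) : ℕ → R
  | 0 => a
  | n + 1 => pw a n * a

/-- `t` is a Drazin inverse of `d`: for some positive integer `m`,
`d^(m+1) * t = d^m`, together with `t * t * d = t` and `d * t = t * d`.
Here `pw d k = d^(k+1)`, so the exponent condition ranges over positive integers. -/
def IsDrazinInv {R : Type*} [NonUnitalRing R] (d t : R) : Prop :=
  (∃ m : ℕ, pw d (m + 1) * t = pw d m) ∧ t * t * d = t ∧ d * t = t * d

/-! Every power of `x a` fixes `b`, so `t`, which commutes with these powers and satisfies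
`(x a)^(m+1) t = (x a)^m`, fixes `b` as well; hence `t x` inherits both defining properties of
the left annihilator `(b,c)`-inverse `x`. Regularity of `t x` reduces to `t (x a) t = t`. -/

section

variable {R : Type*} [NonUnitalRing R]

theorem pw_mul_eq_of_mul_eq {d b : R} (h : d * b = b) (n : ℕ) : pw d n * b = b := by
  induction n with
  | zero => exact h
  | succ n ih => rw [pw, mul_assoc, h, ih]

theorem Commute.pw_left {d t : R} (h : Commute d t) (n : ℕ) : Commute (pw d n) t := by
  induction n with
  | zero => exact h
  | succ n ih => exact ih.mul_left h

namespace IsDrazinInv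

variable {d t : R}

theorem mul_eq_of_mul_eq (ht : IsDrazinInv d t) {b : R} (hb : d * b = b) : t * b = b := by
  obtain ⟨⟨m, hm⟩, -, hcomm⟩ := ht
  calc t * b = t * pw d (m + 1) * b := by rw [mul_assoc, pw_mul_eq_of_mul_eq hb]
    _ = pw d m * b := by rw [← (Commute.pw_left hcomm (m + 1)).eq, hm]
    _ = b := pw_mul_eq_of_mul_eq hb m

theorem mul_mul_self_eq (ht : IsDrazinInv d t) : t * d * t = t := by
  obtain ⟨-, htt, hcomm⟩ := ht
  rw [mul_assoc, hcomm, ← mul_assoc, htt]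

end IsDrazinInv

theorem IsLAnnBCInv.drazinInv_mul {a b c x t : R} (hx : IsLAnnBCInv a b c x)
    (ht : IsDrazinInv (x * a) t) : IsLAnnBCInv a b c (t * x) := by
  obtain ⟨hb, hann⟩ := hx
  refine ⟨?_, fun r hr => ?_⟩
  · rw [mul_assoc, mul_assoc, ← mul_assoc x, hb, ht.mul_eq_of_mul_eq hb]
  · rw [mul_assoc, hann r hr, mul_zero]

end

theorem regular_lann_of_drazin {R : Type*} [NonUnitalRing R] (a b c xl t : R)
    (hl : IsLAnnBCInv a b c xl) (ht : IsDrazinInv (xl * a) t) :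
    t * xl * a * b = b ∧ (∀ r : R, c * r = 0 → t * xl * r = 0) ∧
      t * xl * a * (t * xl) = t * xl := by
  obtain ⟨hb, hann⟩ := hl.drazinInv_mul ht
  refine ⟨hb, hann, ?_⟩
  calc t * xl * a * (t * xl) = t * (xl * a) * t * xl := by simp only [mul_assoc]
    _ = t * xl := by rw [ht.mul_mul_self_eq]
end

section
/- Let R be a (not necessarily unital) associative ring, let a_i, b_i, c_i ∈ R and suppose x_i is an annihilator (b_i,c_i)-inverse of a_i for i = 1, 2. Then for any y ∈ R, y·x₁ = x₂·y if and only if c₂·y·a₁·b₁ = c₂·a₂·y·b₁, y·b₁ = x₂·a₂·y·b₁, and c₂·y = c₂·y·a₁·x₁ (the last two conditions being equivalent, respectively, to y·b₁ ∈ x₂·R and c₂·y ∈ R·x₁). -/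
section OuterInverse

variable {M : Type*} [Semigroup M] {a x : M}

theorem exists_eq_mul_right_iff_of_mul_mul_eq (hx : x * a * x = x) (z : M) :
    (∃ r, z = x * r) ↔ z = x * a * z := by
  refine ⟨?_, fun hz => ⟨a * z, by rw [← mul_assoc]; exact hz⟩⟩
  rintro ⟨r, rfl⟩
  rw [← mul_assoc, hx]

theorem exists_eq_mul_left_iff_of_mul_mul_eq (hx : x * a * x = x) (z : M) :
    (∃ r, z = r * x) ↔ z = z * a * x := by
  refine ⟨?_, fun hz => ⟨z * a, hz⟩⟩
  rintro ⟨r, rfl⟩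
  simp only [mul_assoc] at hx ⊢
  rw [hx]

end OuterInverse

namespace IsAnnBCInv

variable {R : Type*} [NonUnitalRing R]

theorem mul_right_eq_of_mul_b_eq {a b c x : R} (h : IsAnnBCInv a b c x) {r s : R}
    (hrs : r * b = s * b) : r * x = s * x := by
  rw [← sub_eq_zero, ← sub_mul] at hrs ⊢
  exact h.2.2.2.1 _ hrs

theorem mul_left_eq_of_c_mul_eq {a b c x : R} (h : IsAnnBCInv a b c x) {r s : R}
    (hrs : c * r = c * s) : x * r = x * s := by
  rw [← sub_eq_zero, ← mul_sub] at hrs ⊢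
  exact h.2.2.2.2 _ hrs

variable {a₁ b₁ c₁ x₁ a₂ b₂ c₂ x₂ y : R}

theorem conditions_of_mul_eq_mul (h₁ : IsAnnBCInv a₁ b₁ c₁ x₁) (h₂ : IsAnnBCInv a₂ b₂ c₂ x₂)
    (hy : y * x₁ = x₂ * y) :
    c₂ * y * a₁ * b₁ = c₂ * a₂ * y * b₁ ∧ (∃ r, y * b₁ = x₂ * r) ∧ ∃ r, c₂ * y = r * x₁ := by
  refine ⟨?_, ⟨y * a₁ * b₁, ?_⟩, ⟨c₂ * a₂ * y, ?_⟩⟩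
  · calc c₂ * y * a₁ * b₁ = c₂ * a₂ * x₂ * y * a₁ * b₁ := by rw [h₂.2.2.1]
      _ = c₂ * a₂ * y * (x₁ * a₁ * b₁) := by simp only [mul_assoc, ← hy]
      _ = c₂ * a₂ * y * b₁ := by rw [h₁.2.1]
  · calc y * b₁ = y * (x₁ * a₁ * b₁) := by rw [h₁.2.1]
      _ = x₂ * (y * a₁ * b₁) := by simp only [← mul_assoc, hy]
  · calc c₂ * y = c₂ * a₂ * x₂ * y := by rw [h₂.2.2.1]
      _ = c₂ * a₂ * y * x₁ := by simp only [mul_assoc, ← hy]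

theorem mul_eq_mul_of_conditions (h₁ : IsAnnBCInv a₁ b₁ c₁ x₁) (h₂ : IsAnnBCInv a₂ b₂ c₂ x₂)
    (hab : c₂ * y * a₁ * b₁ = c₂ * a₂ * y * b₁) (hb : y * b₁ = x₂ * a₂ * y * b₁)
    (hc : c₂ * y = c₂ * y * a₁ * x₁) : y * x₁ = x₂ * y := by
  have hb' : y * x₁ = x₂ * a₂ * y * x₁ := h₁.mul_right_eq_of_mul_b_eq hb
  have hc' : x₂ * y = x₂ * (y * a₁ * x₁) :=
    h₂.mul_left_eq_of_c_mul_eq (by simpa only [mul_assoc] using hc)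
  have hab' : x₂ * (y * a₁ * x₁) = x₂ * (a₂ * y * x₁) :=
    h₂.mul_left_eq_of_c_mul_eq (by simpa only [mul_assoc] using h₁.mul_right_eq_of_mul_b_eq hab)
  calc y * x₁ = x₂ * (a₂ * y * x₁) := by rw [hb']; simp only [mul_assoc]
    _ = x₂ * y := by rw [← hab', hc']

end IsAnnBCInv

theorem intertwining_ann {R : Type*} [NonUnitalRing R]
    (a₁ b₁ c₁ x₁ a₂ b₂ c₂ x₂ : R)
    (h₁ : IsAnnBCInv a₁ b₁ c₁ x₁) (h₂ : IsAnnBCInv a₂ b₂ c₂ x₂) (y : R) :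
    (y * x₁ = x₂ * y ↔
      c₂ * y * a₁ * b₁ = c₂ * a₂ * y * b₁ ∧ y * b₁ = x₂ * a₂ * y * b₁ ∧
        c₂ * y = c₂ * y * a₁ * x₁) ∧
    (y * b₁ = x₂ * a₂ * y * b₁ ↔ ∃ r : R, y * b₁ = x₂ * r) ∧
    (c₂ * y = c₂ * y * a₁ * x₁ ↔ ∃ r : R, c₂ * y = r * x₁) := by
  have range_b : y * b₁ = x₂ * a₂ * y * b₁ ↔ ∃ r : R, y * b₁ = x₂ * r := by
    rw [mul_assoc (x₂ * a₂)]
    exact (exists_eq_mul_right_iff_of_mul_mul_eq h₂.1 _).symm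
  have range_c : c₂ * y = c₂ * y * a₁ * x₁ ↔ ∃ r : R, c₂ * y = r * x₁ :=
    (exists_eq_mul_left_iff_of_mul_mul_eq h₁.1 _).symm
  refine ⟨⟨fun hy => ?_, fun ⟨hab, hb, hc⟩ => h₁.mul_eq_mul_of_conditions h₂ hab hb hc⟩,
    range_b, range_c⟩
  obtain ⟨hab, hb, hc⟩ := h₁.conditions_of_mul_eq_mul h₂ hy
  exact ⟨hab, range_b.2 hb, range_c.2 hc⟩
end

section
/- Let S be a semigroup, let a_i, b_i, c_i ∈ S and suppose x_i is a (b_i,c_i)-inverse of a_i for i = 1, 2. Then for any y ∈ S, y·x₁ = x₂·y if and only if c₂·y·a₁·b₁ = c₂·a₂·y·b₁, y·b₁ ∈ b₂·S, and c₂·y ∈ S·c₁ (the last two conditions being equivalent, respectively, to y·b₁ = x₂·a₂·y·b₁ and c₂·y = c₂·y·a₁·x₁). -/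
/-- `x` is a `(b,c)`-inverse of `a` in a semigroup. -/
def IsBCInv {S : Type*} [Semigroup S] (a b c x : S) : Prop :=
  x * a * b = b ∧ c * a * x = c ∧ (∃ s : S, x = b * s) ∧ (∃ s : S, x = s * c)

/-! Since `x a b = b` and `x ∈ bS`, the idempotent `x a` fixes from the left exactly the
elements of `bS`; dually `a x` fixes from the right exactly those of `Sc`. Given these
memberships, `y x₁ = x₂ a₂ y x₁` and `x₂ y = x₂ y a₁ x₁`; writing `x₁ = b₁ s₁` and
`x₂ = t₂ c₂`, the equation `c₂ y a₁ b₁ = c₂ a₂ y b₁` identifies the two right-hand sides. -/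

namespace IsBCInv

variable {S : Type*} [Semigroup S] {a b c x : S}

theorem exists_eq_mul_right_iff (h : IsBCInv a b c x) (z : S) :
    (∃ s : S, z = b * s) ↔ z = x * a * z := by
  obtain ⟨hxab, -, ⟨s, hs⟩, -⟩ := h
  constructor
  · rintro ⟨t, rfl⟩
    rw [← mul_assoc, hxab]
  · intro hz
    exact ⟨s * a * z, hz.trans (by rw [hs]; simp only [mul_assoc])⟩

theorem exists_eq_mul_left_iff (h : IsBCInv a b c x) (z : S) :
    (∃ s : S, z = s * c) ↔ z = z * a * x := by
  obtain ⟨-, hcax, -, ⟨t, ht⟩⟩ := h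
  constructor
  · rintro ⟨s, rfl⟩
    rw [mul_assoc s, mul_assoc s, hcax]
  · intro hz
    exact ⟨z * a * t, hz.trans (by rw [ht]; simp only [mul_assoc])⟩

variable {a₁ b₁ c₁ x₁ a₂ b₂ c₂ x₂ : S}

theorem intertwining_conditions (h₁ : IsBCInv a₁ b₁ c₁ x₁) (h₂ : IsBCInv a₂ b₂ c₂ x₂) {y : S}
    (hy : y * x₁ = x₂ * y) :
    c₂ * y * a₁ * b₁ = c₂ * a₂ * y * b₁ ∧ (∃ s : S, y * b₁ = b₂ * s) ∧
      (∃ s : S, c₂ * y = s * c₁) := by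
  obtain ⟨hxab₁, -, -, ⟨t₁, ht₁⟩⟩ := h₁
  obtain ⟨-, hcax₂, ⟨s₂, hs₂⟩, -⟩ := h₂
  have hyb : y * b₁ = x₂ * y * a₁ * b₁ := calc
    y * b₁ = y * (x₁ * a₁ * b₁) := by rw [hxab₁]
    _ = y * x₁ * a₁ * b₁ := by simp only [mul_assoc]
    _ = x₂ * y * a₁ * b₁ := by rw [hy]
  have hcy : c₂ * y = c₂ * a₂ * (y * x₁) := calc
    c₂ * y = c₂ * a₂ * x₂ * y := by rw [hcax₂]
    _ = c₂ * a₂ * (x₂ * y) := by simp only [mul_assoc]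
    _ = c₂ * a₂ * (y * x₁) := by rw [hy]
  refine ⟨?_, ⟨s₂ * y * a₁ * b₁, by rw [hyb, hs₂]; simp only [mul_assoc]⟩,
    ⟨c₂ * a₂ * y * t₁, by rw [hcy, ht₁]; simp only [mul_assoc]⟩⟩
  calc c₂ * y * a₁ * b₁ = c₂ * a₂ * (y * x₁) * a₁ * b₁ := by rw [← hcy]
    _ = c₂ * a₂ * y * (x₁ * a₁ * b₁) := by simp only [mul_assoc]
    _ = c₂ * a₂ * y * b₁ := by rw [hxab₁]

theorem mul_eq_mul_of_intertwining_conditions (h₁ : IsBCInv a₁ b₁ c₁ x₁)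
    (h₂ : IsBCInv a₂ b₂ c₂ x₂) {y : S} (heq : c₂ * y * a₁ * b₁ = c₂ * a₂ * y * b₁)
    (hb : y * b₁ = x₂ * a₂ * y * b₁) (hc : c₂ * y = c₂ * y * a₁ * x₁) :
    y * x₁ = x₂ * y := by
  obtain ⟨s₁, hs₁⟩ := h₁.2.2.1
  obtain ⟨t₂, ht₂⟩ := h₂.2.2.2
  calc y * x₁ = y * b₁ * s₁ := by rw [hs₁, mul_assoc]
    _ = x₂ * a₂ * y * b₁ * s₁ := by rw [← hb]
    _ = t₂ * (c₂ * a₂ * y * b₁) * s₁ := by rw [ht₂]; simp only [mul_assoc]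
    _ = t₂ * (c₂ * y * a₁ * b₁) * s₁ := by rw [heq]
    _ = t₂ * (c₂ * y * a₁ * x₁) := by rw [hs₁]; simp only [mul_assoc]
    _ = x₂ * y := by rw [← hc, ht₂, mul_assoc]

end IsBCInv

theorem intertwining_bc {S : Type*} [Semigroup S]
    (a₁ b₁ c₁ x₁ a₂ b₂ c₂ x₂ : S)
    (h₁ : IsBCInv a₁ b₁ c₁ x₁) (h₂ : IsBCInv a₂ b₂ c₂ x₂) (y : S) :
    (y * x₁ = x₂ * y ↔
      c₂ * y * a₁ * b₁ = c₂ * a₂ * y * b₁ ∧ (∃ s : S, y * b₁ = b₂ * s) ∧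
        (∃ s : S, c₂ * y = s * c₁)) ∧
    ((∃ s : S, y * b₁ = b₂ * s) ↔ y * b₁ = x₂ * a₂ * y * b₁) ∧
    ((∃ s : S, c₂ * y = s * c₁) ↔ c₂ * y = c₂ * y * a₁ * x₁) := by
  have hb : (∃ s : S, y * b₁ = b₂ * s) ↔ y * b₁ = x₂ * a₂ * y * b₁ := by
    rw [h₂.exists_eq_mul_right_iff, mul_assoc _ y]
  have hc : (∃ s : S, c₂ * y = s * c₁) ↔ c₂ * y = c₂ * y * a₁ * x₁ :=
    h₁.exists_eq_mul_left_iff _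
  refine ⟨⟨h₁.intertwining_conditions h₂, ?_⟩, hb, hc⟩
  rintro ⟨heq, hyb, hcy⟩
  exact h₁.mul_eq_mul_of_intertwining_conditions h₂ heq (hb.mp hyb) (hc.mp hcy)
end

section
/- Let R be a (not necessarily unital) associative ring, let a_i, b_i, c_i ∈ R and suppose x_i is an annihilator (b_i,c_i)-inverse of a_i for i = 1, 2. Then for any y ∈ R: (i) y·a₁·x₁ = a₂·x₂·y if and only if y·a₁·b₁ ∈ a₂·x₂·R and c₂·y ∈ R·x₁; (ii) y·x₁·a₁ = x₂·a₂·y if and only if y·b₁ ∈ x₂·R and c₂·a₂·y ∈ R·x₁·a₁; (iii) y·a₁·x₁ = x₂·a₂·y if and only if y·a₁·b₁ ∈ x₂·R and c₂·a₂·y ∈ R·x₁; (iv) y·x₁·a₁ = a₂·x₂·y if and only if y·b₁ ∈ a₂·x₂·R and c₂·y ∈ R·x₁·a₁. -/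
theorem mul_eq_mul_iff_exists_of_cancel {S : Type*} [Semigroup S] {p q b c : S}
    (hp : IsIdempotentElem p) (hq : IsIdempotentElem q) (hpb : p * b = b) (hcq : c * q = c)
    (hb : ∀ {u v : S}, u * b = v * b → u * p = v * p)
    (hc : ∀ {u v : S}, c * u = c * v → q * u = q * v) (y : S) :
    y * p = q * y ↔ (∃ r, y * b = q * r) ∧ (∃ r, c * y = r * p) := by
  constructor
  · intro h
    refine ⟨⟨y * b, ?_⟩, ⟨c * y, ?_⟩⟩
    · calc y * b = y * p * b := by rw [mul_assoc, hpb]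
        _ = q * (y * b) := by rw [h, mul_assoc]
    · calc c * y = c * (q * y) := by rw [← mul_assoc, hcq]
        _ = c * y * p := by rw [← h, mul_assoc]
  · rintro ⟨⟨r, hr⟩, ⟨s, hs⟩⟩
    have right : y * p = q * y * p :=
      hb (by rw [mul_assoc, hr, ← mul_assoc, hq.eq])
    have left : q * y = q * (y * p) :=
      hc (by rw [← mul_assoc, hs, mul_assoc, hp.eq])
    rw [right, mul_assoc, ← left]

namespace IsAnnBCInv

variable {R : Type*} [NonUnitalRing R] {a b c x : R}

theorem mul_x_eq_of_mul_b_eq (h : IsAnnBCInv a b c x) {u v : R} (huv : u * b = v * b) :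
    u * x = v * x := by
  obtain ⟨-, -, -, hann, -⟩ := h
  rw [← sub_eq_zero, ← sub_mul]
  exact hann _ (by rw [sub_mul, huv, sub_self])

theorem x_mul_eq_of_c_mul_eq (h : IsAnnBCInv a b c x) {u v : R} (huv : c * u = c * v) :
    x * u = x * v := by
  obtain ⟨-, -, -, -, hann⟩ := h
  rw [← sub_eq_zero, ← mul_sub]
  exact hann _ (by rw [mul_sub, huv, sub_self])

theorem isIdempotentElem_ax (h : IsAnnBCInv a b c x) : IsIdempotentElem (a * x) := by
  rw [IsIdempotentElem, mul_assoc, ← mul_assoc x, h.1]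

theorem isIdempotentElem_xa (h : IsAnnBCInv a b c x) : IsIdempotentElem (x * a) := by
  rw [IsIdempotentElem, ← mul_assoc, h.1]

theorem ax_mul_ab (h : IsAnnBCInv a b c x) : a * x * (a * b) = a * b := by
  rw [mul_assoc, ← mul_assoc x, h.2.1]

theorem xa_mul_b (h : IsAnnBCInv a b c x) : x * a * b = b := h.2.1

theorem c_mul_ax (h : IsAnnBCInv a b c x) : c * (a * x) = c := by
  rw [← mul_assoc, h.2.2.1]

theorem ca_mul_xa (h : IsAnnBCInv a b c x) : c * a * (x * a) = c * a := by
  rw [← mul_assoc, h.2.2.1]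

theorem mul_ax_eq_of_mul_ab_eq (h : IsAnnBCInv a b c x) {u v : R}
    (huv : u * (a * b) = v * (a * b)) :
    u * (a * x) = v * (a * x) := by
  simpa only [mul_assoc] using h.mul_x_eq_of_mul_b_eq (u := u * a) (v := v * a)
    (by simpa only [mul_assoc] using huv)

theorem mul_xa_eq_of_mul_b_eq (h : IsAnnBCInv a b c x) {u v : R} (huv : u * b = v * b) :
    u * (x * a) = v * (x * a) := by
  rw [← mul_assoc, ← mul_assoc, h.mul_x_eq_of_mul_b_eq huv]

theorem ax_mul_eq_of_c_mul_eq (h : IsAnnBCInv a b c x) {u v : R} (huv : c * u = c * v) :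
    a * x * u = a * x * v := by
  rw [mul_assoc, mul_assoc, h.x_mul_eq_of_c_mul_eq huv]

theorem xa_mul_eq_of_ca_mul_eq (h : IsAnnBCInv a b c x) {u v : R}
    (huv : c * a * u = c * a * v) :
    x * a * u = x * a * v := by
  simpa only [mul_assoc] using h.x_mul_eq_of_c_mul_eq (u := a * u) (v := a * v)
    (by simpa only [mul_assoc] using huv)

theorem exists_eq_mul_x_iff_mul_ax (h : IsAnnBCInv a b c x) (z : R) :
    (∃ r, z = r * x) ↔ ∃ r, z = r * (a * x) :=
  ⟨fun ⟨r, hr⟩ => ⟨r * x, by rw [hr, mul_assoc r, ← mul_assoc x, h.1]⟩,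
    fun ⟨r, hr⟩ => ⟨r * a, by rw [hr, mul_assoc]⟩⟩

theorem exists_eq_x_mul_iff_xa_mul (h : IsAnnBCInv a b c x) (z : R) :
    (∃ r, z = x * r) ↔ ∃ r, z = x * a * r :=
  ⟨fun ⟨r, hr⟩ => ⟨x * r, by rw [hr, ← mul_assoc, h.1]⟩,
    fun ⟨r, hr⟩ => ⟨a * r, by rw [hr, mul_assoc]⟩⟩

end IsAnnBCInv

open IsAnnBCInv in
theorem intertwining_special_ann {R : Type*} [NonUnitalRing R]
    (a₁ b₁ c₁ x₁ a₂ b₂ c₂ x₂ : R)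
    (h₁ : IsAnnBCInv a₁ b₁ c₁ x₁) (h₂ : IsAnnBCInv a₂ b₂ c₂ x₂) (y : R) :
    (y * a₁ * x₁ = a₂ * x₂ * y ↔
      (∃ r : R, y * a₁ * b₁ = a₂ * x₂ * r) ∧ (∃ r : R, c₂ * y = r * x₁)) ∧
    (y * x₁ * a₁ = x₂ * a₂ * y ↔
      (∃ r : R, y * b₁ = x₂ * r) ∧ (∃ r : R, c₂ * a₂ * y = r * x₁ * a₁)) ∧
    (y * a₁ * x₁ = x₂ * a₂ * y ↔
      (∃ r : R, y * a₁ * b₁ = x₂ * r) ∧ (∃ r : R, c₂ * a₂ * y = r * x₁)) ∧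
    (y * x₁ * a₁ = a₂ * x₂ * y ↔
      (∃ r : R, y * b₁ = a₂ * x₂ * r) ∧ (∃ r : R, c₂ * y = r * x₁ * a₁)) := by
  rw [h₁.exists_eq_mul_x_iff_mul_ax, h₁.exists_eq_mul_x_iff_mul_ax,
    h₂.exists_eq_x_mul_iff_xa_mul, h₂.exists_eq_x_mul_iff_xa_mul]
  refine ⟨?_, ?_, ?_, ?_⟩
  · simpa only [mul_assoc] using mul_eq_mul_iff_exists_of_cancel h₁.isIdempotentElem_ax
      h₂.isIdempotentElem_ax h₁.ax_mul_ab h₂.c_mul_ax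
      h₁.mul_ax_eq_of_mul_ab_eq h₂.ax_mul_eq_of_c_mul_eq y
  · simpa only [mul_assoc] using mul_eq_mul_iff_exists_of_cancel h₁.isIdempotentElem_xa
      h₂.isIdempotentElem_xa h₁.xa_mul_b h₂.ca_mul_xa
      h₁.mul_xa_eq_of_mul_b_eq h₂.xa_mul_eq_of_ca_mul_eq y
  · simpa only [mul_assoc] using mul_eq_mul_iff_exists_of_cancel h₁.isIdempotentElem_ax
      h₂.isIdempotentElem_xa h₁.ax_mul_ab h₂.ca_mul_xa
      h₁.mul_ax_eq_of_mul_ab_eq h₂.xa_mul_eq_of_ca_mul_eq y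
  · simpa only [mul_assoc] using mul_eq_mul_iff_exists_of_cancel h₁.isIdempotentElem_xa
      h₂.isIdempotentElem_ax h₁.xa_mul_b h₂.c_mul_ax
      h₁.mul_xa_eq_of_mul_b_eq h₂.ax_mul_eq_of_c_mul_eq y
end

section
/- Let S be a semigroup, let a_i, b_i, c_i ∈ S and suppose x_i is a (b_i,c_i)-inverse of a_i for i = 1, 2. Then for any y ∈ S: (i) y·a₁·x₁ = a₂·x₂·y if and only if y·a₁·b₁ ∈ a₂·b₂·S and c₂·y ∈ S·c₁; (ii) y·x₁·a₁ = x₂·a₂·y if and only if y·b₁ ∈ b₂·S and c₂·a₂·y ∈ S·c₁·a₁; (iii) y·a₁·x₁ = x₂·a₂·y if and only if y·a₁·b₁ ∈ b₂·S and c₂·a₂·y ∈ S·c₁; (iv) y·x₁·a₁ = a₂·x₂·y if and only if y·b₁ ∈ a₂·b₂·S and c₂·y ∈ S·c₁·a₁. -/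
/-- In a monoid this says: `u` is idempotent, `u S = b S` and `S u = S c`. -/
structure IsIdempotentWithIdeals {S : Type*} [Semigroup S] (u b c : S) : Prop where
  mul_left_eq : u * b = b
  mul_right_eq : c * u = c
  mem_left_ideal : ∃ s, u = b * s
  mem_right_ideal : ∃ s, u = s * c

namespace IsIdempotentWithIdeals

variable {S : Type*} [Semigroup S] {u₁ b₁ c₁ u₂ b₂ c₂ : S}

theorem semiconjBy_iff (h₁ : IsIdempotentWithIdeals u₁ b₁ c₁)
    (h₂ : IsIdempotentWithIdeals u₂ b₂ c₂) (y : S) :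
    SemiconjBy y u₁ u₂ ↔ (∃ s, y * b₁ = b₂ * s) ∧ (∃ s, c₂ * y = s * c₁) := by
  obtain ⟨hb₁, hc₁, ⟨σ₁, hσ₁⟩, ⟨τ₁, hτ₁⟩⟩ := h₁
  obtain ⟨hb₂, hc₂, ⟨σ₂, hσ₂⟩, ⟨τ₂, hτ₂⟩⟩ := h₂
  constructor
  · intro h
    refine ⟨⟨σ₂ * y * b₁, ?_⟩, ⟨c₂ * y * τ₁, ?_⟩⟩
    · calc y * b₁ = y * u₁ * b₁ := by rw [mul_assoc, hb₁]
        _ = b₂ * (σ₂ * y * b₁) := by rw [h.eq, hσ₂]; simp only [mul_assoc]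
    · calc c₂ * y = c₂ * (u₂ * y) := by rw [← mul_assoc, hc₂]
        _ = c₂ * y * τ₁ * c₁ := by rw [← h.eq, hτ₁]; simp only [mul_assoc]
  · rintro ⟨⟨s, hs⟩, ⟨t, ht⟩⟩
    have left : y * u₁ = u₂ * y * u₁ :=
      calc y * u₁ = b₂ * s * σ₁ := by rw [hσ₁, ← mul_assoc, hs]
        _ = u₂ * (b₂ * s) * σ₁ := by rw [← mul_assoc u₂, hb₂]
        _ = u₂ * y * u₁ := by rw [← hs, hσ₁]; simp only [mul_assoc]
    have right : u₂ * y = u₂ * y * u₁ :=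
      calc u₂ * y = τ₂ * (t * c₁) := by rw [hτ₂, mul_assoc, ht]
        _ = τ₂ * (t * c₁ * u₁) := by rw [mul_assoc t, hc₁]
        _ = u₂ * y * u₁ := by rw [← ht, hτ₂]; simp only [mul_assoc]
    exact left.trans right.symm

end IsIdempotentWithIdeals

namespace IsBCInv

variable {S : Type*} [Semigroup S] {a b c x : S}

theorem isIdempotentWithIdeals_mul_inv (h : IsBCInv a b c x) :
    IsIdempotentWithIdeals (a * x) (a * b) c := by
  obtain ⟨hb, hc, ⟨s, hs⟩, ⟨t, ht⟩⟩ := h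
  refine ⟨?_, ?_, ⟨s, ?_⟩, ⟨a * t, ?_⟩⟩
  · rw [mul_assoc, ← mul_assoc x, hb]
  · rw [← mul_assoc, hc]
  · rw [hs, mul_assoc]
  · rw [ht, mul_assoc]

theorem isIdempotentWithIdeals_inv_mul (h : IsBCInv a b c x) :
    IsIdempotentWithIdeals (x * a) b (c * a) := by
  obtain ⟨hb, hc, ⟨s, hs⟩, ⟨t, ht⟩⟩ := h
  refine ⟨hb, ?_, ⟨s * a, ?_⟩, ⟨t, ?_⟩⟩
  · rw [← mul_assoc, hc]
  · rw [hs, mul_assoc]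
  · rw [ht, mul_assoc]

end IsBCInv

open IsBCInv IsIdempotentWithIdeals in
theorem intertwining_special_bc {S : Type*} [Semigroup S]
    (a₁ b₁ c₁ x₁ a₂ b₂ c₂ x₂ : S)
    (h₁ : IsBCInv a₁ b₁ c₁ x₁) (h₂ : IsBCInv a₂ b₂ c₂ x₂) (y : S) :
    (y * a₁ * x₁ = a₂ * x₂ * y ↔
      (∃ s : S, y * a₁ * b₁ = a₂ * b₂ * s) ∧ (∃ s : S, c₂ * y = s * c₁)) ∧
    (y * x₁ * a₁ = x₂ * a₂ * y ↔
      (∃ s : S, y * b₁ = b₂ * s) ∧ (∃ s : S, c₂ * a₂ * y = s * c₁ * a₁)) ∧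
    (y * a₁ * x₁ = x₂ * a₂ * y ↔
      (∃ s : S, y * a₁ * b₁ = b₂ * s) ∧ (∃ s : S, c₂ * a₂ * y = s * c₁)) ∧
    (y * x₁ * a₁ = a₂ * x₂ * y ↔
      (∃ s : S, y * b₁ = a₂ * b₂ * s) ∧ (∃ s : S, c₂ * y = s * c₁ * a₁)) := by
  have ax₁ := h₁.isIdempotentWithIdeals_mul_inv
  have xa₁ := h₁.isIdempotentWithIdeals_inv_mul
  have ax₂ := h₂.isIdempotentWithIdeals_mul_inv
  have xa₂ := h₂.isIdempotentWithIdeals_inv_mul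
  refine ⟨?_, ?_, ?_, ?_⟩
  · simpa only [SemiconjBy, mul_assoc] using semiconjBy_iff ax₁ ax₂ y
  · simpa only [SemiconjBy, mul_assoc] using semiconjBy_iff xa₁ xa₂ y
  · simpa only [SemiconjBy, mul_assoc] using semiconjBy_iff ax₁ xa₂ y
  · simpa only [SemiconjBy, mul_assoc] using semiconjBy_iff xa₁ ax₂ y
end

section
/- Let S be a semigroup, let a_i, b_i, c_i ∈ S and suppose x_i is a (b_i,c_i)-inverse of a_i for i = 1, 2. Then the following are equivalent: (i) x₁·a₁ = a₂·x₂; (ii) a₂·b₂·S = b₁·S and S·c₁·a₁ = S·c₂; (iii) a₂·b₂ ∈ b₁·S and c₁·a₁ ∈ S·c₂; (iv) b₁ ∈ a₂·b₂·S and c₂ ∈ S·c₁·a₁. -/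
section

variable {S : Type*} [Semigroup S]

theorem dvd_congr_of_dvd_of_dvd {u u' v v' : S} (hu : u ∣ u') (hu' : u' ∣ u) (hv : v ∣ v')
    (hv' : v' ∣ v) : u ∣ v ↔ u' ∣ v' :=
  ⟨fun h => hu'.trans (h.trans hv), fun h => hu.trans (h.trans hv')⟩

theorem rightDvd_congr_of_rightDvd_of_rightDvd {u u' v v' : S} (hu : u ∣ᵣ u') (hu' : u' ∣ᵣ u)
    (hv : v ∣ᵣ v') (hv' : v' ∣ᵣ v) : u ∣ᵣ v ↔ u' ∣ᵣ v' :=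
  ⟨fun h => hu'.trans (h.trans hv), fun h => hu.trans (h.trans hv')⟩

theorem forall_dvd_iff_dvd_iff {u v : S} (hu : u ∣ u) (hv : v ∣ v) :
    (∀ z, u ∣ z ↔ v ∣ z) ↔ u ∣ v ∧ v ∣ u :=
  ⟨fun h => ⟨(h v).2 hv, (h u).1 hu⟩, fun ⟨huv, hvu⟩ _ => ⟨hvu.trans, huv.trans⟩⟩

theorem forall_rightDvd_iff_rightDvd_iff {u v : S} (hu : u ∣ᵣ u) (hv : v ∣ᵣ v) :
    (∀ z, u ∣ᵣ z ↔ v ∣ᵣ z) ↔ u ∣ᵣ v ∧ v ∣ᵣ u :=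
  ⟨fun h => ⟨(h v).2 hv, (h u).1 hu⟩, fun ⟨huv, hvu⟩ _ => ⟨hvu.trans, huv.trans⟩⟩

theorem IsIdempotentElem.eq_iff_dvd_and_rightDvd {e f : S} (he : IsIdempotentElem e)
    (hf : IsIdempotentElem f) : e = f ↔ e ∣ f ∧ f ∣ᵣ e := by
  refine ⟨?_, fun ⟨⟨t, ht⟩, ⟨s, hs⟩⟩ => ?_⟩
  · rintro rfl
    exact ⟨⟨e, he.symm⟩, ⟨e, he.symm⟩⟩
  · have hef_right : e * f = f := by rw [ht, ← mul_assoc, he.eq]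
    have hef_left : e * f = e := by rw [hs, mul_assoc, hf.eq]
    rw [← hef_left, hef_right]

namespace IsBCInv

variable {a b c x : S} (h : IsBCInv a b c x)
include h

theorem inv_mul_inv : x * a * x = x := by
  obtain ⟨hb, -, ⟨s, rfl⟩, -⟩ := h
  rw [← mul_assoc, hb]

theorem isIdempotentElem_inv_mul : IsIdempotentElem (x * a) := by
  rw [IsIdempotentElem, ← mul_assoc, h.inv_mul_inv]

theorem isIdempotentElem_mul_inv : IsIdempotentElem (a * x) := by
  rw [IsIdempotentElem, mul_assoc, ← mul_assoc x, h.inv_mul_inv]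

theorem dvd_inv_mul : b ∣ x * a := by
  obtain ⟨-, -, ⟨s, rfl⟩, -⟩ := h
  exact ⟨s * a, mul_assoc b s a⟩

theorem inv_mul_dvd : x * a ∣ b :=
  ⟨b, h.1.symm⟩

theorem mul_dvd_mul_inv : a * b ∣ a * x := by
  obtain ⟨-, -, ⟨s, rfl⟩, -⟩ := h
  exact ⟨s, (mul_assoc a b s).symm⟩

theorem mul_inv_dvd_mul : a * x ∣ a * b :=
  ⟨a * b, by rw [← mul_assoc, mul_assoc a x a, mul_assoc, h.1]⟩

theorem rightDvd_inv_mul : c * a ∣ᵣ x * a := by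
  obtain ⟨-, -, -, ⟨s, rfl⟩⟩ := h
  exact ⟨s, mul_assoc s c a⟩

theorem inv_mul_rightDvd : x * a ∣ᵣ c * a :=
  ⟨c * a, by rw [← mul_assoc, h.2.1]⟩

theorem rightDvd_mul_inv : c ∣ᵣ a * x := by
  obtain ⟨-, -, -, ⟨s, rfl⟩⟩ := h
  exact ⟨a * s, (mul_assoc a s c).symm⟩

theorem mul_inv_rightDvd : a * x ∣ᵣ c :=
  ⟨c, by rw [← mul_assoc, h.2.1]⟩

end IsBCInv

end

theorem intertwine_equivalences {S : Type*} [Semigroup S]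
    (a₁ b₁ c₁ x₁ a₂ b₂ c₂ x₂ : S)
    (h₁ : IsBCInv a₁ b₁ c₁ x₁) (h₂ : IsBCInv a₂ b₂ c₂ x₂) :
    (x₁ * a₁ = a₂ * x₂ ↔
      ((∀ z : S, (∃ s : S, z = a₂ * b₂ * s) ↔ (∃ s : S, z = b₁ * s)) ∧
        (∀ z : S, (∃ s : S, z = s * c₁ * a₁) ↔ (∃ s : S, z = s * c₂)))) ∧
    (x₁ * a₁ = a₂ * x₂ ↔
      ((∃ s : S, a₂ * b₂ = b₁ * s) ∧ (∃ s : S, c₁ * a₁ = s * c₂))) ∧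
    (x₁ * a₁ = a₂ * x₂ ↔
      ((∃ s : S, b₁ = a₂ * b₂ * s) ∧ (∃ s : S, c₂ = s * c₁ * a₁))) := by
  have he := h₁.isIdempotentElem_inv_mul
  have hf := h₂.isIdempotentElem_mul_inv
  have iii : x₁ * a₁ = a₂ * x₂ ↔ b₁ ∣ a₂ * b₂ ∧ c₂ ∣ᵣ c₁ * a₁ := by
    rw [he.eq_iff_dvd_and_rightDvd hf,
      dvd_congr_of_dvd_of_dvd h₁.dvd_inv_mul h₁.inv_mul_dvd h₂.mul_dvd_mul_inv h₂.mul_inv_dvd_mul,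
      rightDvd_congr_of_rightDvd_of_rightDvd h₂.rightDvd_mul_inv h₂.mul_inv_rightDvd
        h₁.rightDvd_inv_mul h₁.inv_mul_rightDvd]
  have iv : x₁ * a₁ = a₂ * x₂ ↔ a₂ * b₂ ∣ b₁ ∧ c₁ * a₁ ∣ᵣ c₂ := by
    rw [eq_comm, hf.eq_iff_dvd_and_rightDvd he,
      dvd_congr_of_dvd_of_dvd h₂.mul_dvd_mul_inv h₂.mul_inv_dvd_mul h₁.dvd_inv_mul h₁.inv_mul_dvd,
      rightDvd_congr_of_rightDvd_of_rightDvd h₁.rightDvd_inv_mul h₁.inv_mul_rightDvd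
        h₂.rightDvd_mul_inv h₂.mul_inv_rightDvd]
  have ii : x₁ * a₁ = a₂ * x₂ ↔
      (∀ z, a₂ * b₂ ∣ z ↔ b₁ ∣ z) ∧ (∀ z, c₁ * a₁ ∣ᵣ z ↔ c₂ ∣ᵣ z) := by
    rw [forall_dvd_iff_dvd_iff (h₂.mul_dvd_mul_inv.trans h₂.mul_inv_dvd_mul)
        (h₁.dvd_inv_mul.trans h₁.inv_mul_dvd),
      forall_rightDvd_iff_rightDvd_iff (h₁.rightDvd_inv_mul.trans h₁.inv_mul_rightDvd)
        (h₂.rightDvd_mul_inv.trans h₂.mul_inv_rightDvd)]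
    constructor
    · intro h
      exact ⟨⟨(iv.1 h).1, (iii.1 h).1⟩, ⟨(iv.1 h).2, (iii.1 h).2⟩⟩
    · rintro ⟨⟨-, hR⟩, ⟨-, hL⟩⟩
      exact iii.2 ⟨hR, hL⟩
  simp only [dvd_def, RightDvd, mul_assoc] at ii iii iv ⊢
  exact ⟨ii, iii, iv⟩
end

section
/- Let R be a (not necessarily unital) associative ring, let a_i, b_i, c_i ∈ R and suppose x_i is an annihilator (b_i,c_i)-inverse of a_i for i = 1, 2. If b₁ = b₂, then x₁·a₁·x₂ = x₂ and x₂·a₂·x₁ = x₁. Dually, if c₁ = c₂, then x₁·a₂·x₂ = x₁ and x₂·a₁·x₁ = x₂. -/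
/-! Since `∘b ⊆ ∘x`, two left multipliers that agree on `b` agree on `x`; as `x₁ a₁` and `x₂ a₂`
both fix `b`, this turns `x₁ a₁ x₂` into `x₂ a₂ x₂ = x₂`. The case `c₁ = c₂` is the mirror image,
using `c∘ ⊆ x∘` and the fact that `a₁ x₁` and `a₂ x₂` are both fixed by `c` from the left. -/

namespace IsAnnBCInv

variable {R : Type*} [NonUnitalRing R] {a b c x : R}

theorem mul_eq_mul_of_mul_eq_mul (h : IsAnnBCInv a b c x) {p q : R} (hpq : p * b = q * b) :
    p * x = q * x := by
  rw [← sub_eq_zero, ← sub_mul] at hpq ⊢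
  exact h.2.2.2.1 _ hpq

theorem mul_eq_mul_of_mul_eq_mul' (h : IsAnnBCInv a b c x) {p q : R} (hpq : c * p = c * q) :
    x * p = x * q := by
  rw [← sub_eq_zero, ← mul_sub] at hpq ⊢
  exact h.2.2.2.2 _ hpq

theorem mul_mul_eq_of_eq_left {a₁ a₂ c₁ c₂ x₁ x₂ : R}
    (h₁ : IsAnnBCInv a₁ b c₁ x₁) (h₂ : IsAnnBCInv a₂ b c₂ x₂) : x₁ * a₁ * x₂ = x₂ :=
  calc x₁ * a₁ * x₂ = x₂ * a₂ * x₂ := h₂.mul_eq_mul_of_mul_eq_mul (h₁.2.1.trans h₂.2.1.symm)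
    _ = x₂ := h₂.1

theorem mul_mul_eq_of_eq_right {a₁ a₂ b₁ b₂ x₁ x₂ : R}
    (h₁ : IsAnnBCInv a₁ b₁ c x₁) (h₂ : IsAnnBCInv a₂ b₂ c x₂) : x₁ * a₂ * x₂ = x₁ := by
  have hc : c * (a₂ * x₂) = c * (a₁ * x₁) := by
    simp only [← mul_assoc, h₁.2.2.1, h₂.2.2.1]
  calc x₁ * a₂ * x₂ = x₁ * a₁ * x₁ := by
        simpa only [← mul_assoc] using h₁.mul_eq_mul_of_mul_eq_mul' hc
    _ = x₁ := h₁.1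

end IsAnnBCInv

theorem absorption_lemma {R : Type*} [NonUnitalRing R]
    (a₁ b₁ c₁ x₁ a₂ b₂ c₂ x₂ : R)
    (h₁ : IsAnnBCInv a₁ b₁ c₁ x₁) (h₂ : IsAnnBCInv a₂ b₂ c₂ x₂) :
    (b₁ = b₂ → x₁ * a₁ * x₂ = x₂ ∧ x₂ * a₂ * x₁ = x₁) ∧
      (c₁ = c₂ → x₁ * a₂ * x₂ = x₁ ∧ x₂ * a₁ * x₁ = x₂) := by
  constructor
  · rintro rfl
    exact ⟨h₁.mul_mul_eq_of_eq_left h₂, h₂.mul_mul_eq_of_eq_left h₁⟩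
  · rintro rfl
    exact ⟨h₁.mul_mul_eq_of_eq_right h₂, h₂.mul_mul_eq_of_eq_right h₁⟩
end

section
/- Let R be a (not necessarily unital) associative ring, let a₁, a₂, b, c ∈ R and suppose x₁ is an annihilator (b,c)-inverse of a₁ and x₂ is an annihilator (b,c)-inverse of a₂. Then the absorption law holds: x₁ + x₂ = x₁·(a₁ + a₂)·x₂ = x₂·(a₁ + a₂)·x₁. -/
namespace IsAnnBCInv

variable {R : Type*} [NonUnitalRing R] {a b c x : R}

theorem mul_eq_self_of_mul_eq (h : IsAnnBCInv a b c x) {y : R} (hy : y * b = b) :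
    y * x = x := by
  obtain ⟨hxax, hxab, -, hann, -⟩ := h
  have hb : (y - x * a) * b = 0 := by rw [sub_mul, hy, hxab, sub_self]
  have hx := hann _ hb
  rwa [sub_mul, hxax, sub_eq_zero] at hx

theorem self_mul_eq_of_mul_eq (h : IsAnnBCInv a b c x) {y : R} (hy : c * y = c) :
    x * y = x := by
  obtain ⟨hxax, -, hcax, -, hann⟩ := h
  have hc : c * (y - a * x) = 0 := by rw [mul_sub, hy, ← mul_assoc, hcax, sub_self]
  have hx := hann _ hc
  rwa [mul_sub, ← mul_assoc, hxax, sub_eq_zero] at hx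

theorem mul_add_mul_eq_add {a₁ a₂ x₁ x₂ : R} (h₁ : IsAnnBCInv a₁ b c x₁)
    (h₂ : IsAnnBCInv a₂ b c x₂) :
    x₁ * (a₁ + a₂) * x₂ = x₂ + x₁ := by
  have hx₂ : x₁ * a₁ * x₂ = x₂ := h₂.mul_eq_self_of_mul_eq h₁.2.1
  have hx₁ : x₁ * (a₂ * x₂) = x₁ :=
    h₁.self_mul_eq_of_mul_eq (by rw [← mul_assoc]; exact h₂.2.2.1)
  rw [mul_add, add_mul, hx₂, mul_assoc x₁ a₂, hx₁]

end IsAnnBCInv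

theorem absorption_law {R : Type*} [NonUnitalRing R] (a₁ a₂ b c x₁ x₂ : R)
    (h₁ : IsAnnBCInv a₁ b c x₁) (h₂ : IsAnnBCInv a₂ b c x₂) :
    x₁ + x₂ = x₁ * (a₁ + a₂) * x₂ ∧ x₁ + x₂ = x₂ * (a₁ + a₂) * x₁ := by
  refine ⟨by rw [h₁.mul_add_mul_eq_add h₂, add_comm], ?_⟩
  rw [add_comm a₁, h₂.mul_add_mul_eq_add h₁]
end

section
/- Let R be a (not necessarily unital) associative ring, let a_i, b_i, c_i ∈ R and suppose x_i is an annihilator (b_i,c_i)-inverse of a_i for i = 1, 2. If one of the following holds: (i) x₁·a₁ = a₁·x₁ and c₁ = c₂; (ii) x₂·a₂ = a₂·x₂ and b₁ = b₂; (iii) x₁·a₁ = a₂·x₂; then x₂·x₁ is an annihilator (b₂,c₁)-inverse of a₁·a₂ (the reverse order law). -/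
/-!
The annihilator inclusions of `x₂ * x₁` are inherited from `∘b₂ ⊆ ∘x₂` and `c₁∘ ⊆ x₁∘`, so only
the three equations need the case hypotheses. In case (iii) they follow by substituting
`x₁ a₁ = a₂ x₂` and absorbing with `x a x = x`, `x a b = b`, `c a x = c`. In case (i) the
inclusion `c₁∘ ⊆ x₂∘` (from `c₁ = c₂`) lets `x₂` absorb the factor `a₁ x₁`, and `c₁∘ ⊆ x₁∘` lets
`x₁` absorb `a₂ x₂`. Case (ii) is case (i) in the opposite ring, where the roles of `b` and `c`
are exchanged.
-/

open MulOpposite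

section

variable {R : Type*} [NonUnitalRing R]

theorem isAnnBCInv_op_iff {a b c x : R} :
    IsAnnBCInv (op a) (op c) (op b) (op x) ↔ IsAnnBCInv a b c x := by
  simp only [IsAnnBCInv, ← op_mul, op_inj, MulOpposite.forall, ← op_zero, mul_assoc]
  tauto

theorem mul_mul_eq_of_ann_le {c d x : R} (hann : ∀ r, c * r = 0 → x * r = 0)
    (hd : c * d = c) (t : R) : x * (d * t) = x * t := by
  have h := hann (d * t - t) (by rw [mul_sub, ← mul_assoc, hd, sub_self])
  rwa [mul_sub, sub_eq_zero] at h

theorem isAnnBCInv_mul_of_ann_le {a₁ a₂ b₂ c₁ x₁ x₂ : R}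
    (hx₂ : ∀ r, r * b₂ = 0 → r * x₂ = 0) (hx₁ : ∀ r, c₁ * r = 0 → x₁ * r = 0)
    (hxax : x₂ * x₁ * (a₁ * a₂) * (x₂ * x₁) = x₂ * x₁) (hxab : x₂ * x₁ * (a₁ * a₂) * b₂ = b₂)
    (hcax : c₁ * (a₁ * a₂) * (x₂ * x₁) = c₁) :
    IsAnnBCInv (a₁ * a₂) b₂ c₁ (x₂ * x₁) :=
  ⟨hxax, hxab, hcax, fun r hr => by rw [← mul_assoc, hx₂ r hr, zero_mul],
    fun r hr => by rw [mul_assoc, hx₁ r hr, mul_zero]⟩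

namespace IsAnnBCInv

variable {a₁ a₂ b₁ b₂ c₁ c₂ x₁ x₂ : R}

theorem op {a b c x : R} (h : IsAnnBCInv a b c x) : IsAnnBCInv (op a) (op c) (op b) (op x) :=
  isAnnBCInv_op_iff.2 h

theorem mul_of_mul_eq_mul (h₁ : IsAnnBCInv a₁ b₁ c₁ x₁) (h₂ : IsAnnBCInv a₂ b₂ c₂ x₂)
    (hx : x₁ * a₁ = a₂ * x₂) : IsAnnBCInv (a₁ * a₂) b₂ c₁ (x₂ * x₁) := by
  obtain ⟨hxax₁, -, hcax₁, -, hann₁⟩ := h₁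
  obtain ⟨hxax₂, hxab₂, -, hann₂, -⟩ := h₂
  refine isAnnBCInv_mul_of_ann_le hann₂ hann₁ ?_ ?_ ?_
  · calc x₂ * x₁ * (a₁ * a₂) * (x₂ * x₁) = x₂ * (x₁ * a₁) * a₂ * x₂ * x₁ := by
          simp only [mul_assoc]
      _ = x₂ * x₁ := by rw [hx, ← mul_assoc, hxax₂, hxax₂]
  · calc x₂ * x₁ * (a₁ * a₂) * b₂ = x₂ * (x₁ * a₁) * a₂ * b₂ := by simp only [mul_assoc]
      _ = b₂ := by rw [hx, ← mul_assoc, hxax₂, hxab₂]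
  · calc c₁ * (a₁ * a₂) * (x₂ * x₁) = c₁ * a₁ * (a₂ * x₂) * x₁ := by simp only [mul_assoc]
      _ = c₁ := by rw [← hx, ← mul_assoc, hcax₁, hcax₁]

theorem mul_of_commute_left (h₁ : IsAnnBCInv a₁ b₁ c₁ x₁) (h₂ : IsAnnBCInv a₂ b₂ c₁ x₂)
    (hx : Commute x₁ a₁) : IsAnnBCInv (a₁ * a₂) b₂ c₁ (x₂ * x₁) := by
  obtain ⟨hxax₁, -, hcax₁, -, hann₁⟩ := h₁
  obtain ⟨hxax₂, hxab₂, hcax₂, hann₂, hann₂'⟩ := h₂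
  have hxt : ∀ t, x₁ * (a₁ * t) = a₁ * (x₁ * t) := fun t => by
    rw [← mul_assoc, hx.eq, mul_assoc]
  have absorb₂ : ∀ t, x₂ * (a₁ * x₁ * t) = x₂ * t :=
    mul_mul_eq_of_ann_le hann₂' (by rw [← mul_assoc, hcax₁])
  have absorb₁ : ∀ t, x₁ * (a₂ * x₂ * t) = x₁ * t :=
    mul_mul_eq_of_ann_le hann₁ (by rw [← mul_assoc, hcax₂])
  refine isAnnBCInv_mul_of_ann_le hann₂ hann₁ ?_ ?_ ?_
  · calc x₂ * x₁ * (a₁ * a₂) * (x₂ * x₁) = x₂ * (a₁ * x₁ * (a₂ * x₂ * x₁)) := by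
          rw [← hx.eq]; simp only [mul_assoc]
      _ = x₂ * x₁ := by rw [absorb₂, ← mul_assoc, ← mul_assoc, hxax₂]
  · calc x₂ * x₁ * (a₁ * a₂) * b₂ = x₂ * (a₁ * x₁ * (a₂ * b₂)) := by
          rw [← hx.eq]; simp only [mul_assoc]
      _ = b₂ := by rw [absorb₂, ← mul_assoc, hxab₂]
  · calc c₁ * (a₁ * a₂) * (x₂ * x₁) = c₁ * a₁ * x₁ * (a₁ * a₂ * x₂ * x₁) := by
          rw [hcax₁]; simp only [mul_assoc]
      _ = c₁ * a₁ * a₁ * (x₁ * (a₂ * x₂ * x₁)) := by simp only [mul_assoc, hxt]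
      _ = c₁ * a₁ * (x₁ * a₁ * x₁) := by rw [absorb₁]; simp only [mul_assoc, hxt]
      _ = c₁ := by rw [hxax₁, hcax₁]

theorem mul_of_commute_right (h₁ : IsAnnBCInv a₁ b₁ c₁ x₁) (h₂ : IsAnnBCInv a₂ b₁ c₂ x₂)
    (hx : Commute x₂ a₂) : IsAnnBCInv (a₁ * a₂) b₁ c₁ (x₂ * x₁) := by
  have h := h₂.op.mul_of_commute_left h₁.op (congrArg MulOpposite.op hx.eq.symm)
  rwa [← op_mul, ← op_mul, isAnnBCInv_op_iff] at h

end IsAnnBCInv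

end

theorem reverse_order_law_sufficient {R : Type*} [NonUnitalRing R]
    (a₁ b₁ c₁ x₁ a₂ b₂ c₂ x₂ : R)
    (h₁ : IsAnnBCInv a₁ b₁ c₁ x₁) (h₂ : IsAnnBCInv a₂ b₂ c₂ x₂)
    (h : (x₁ * a₁ = a₁ * x₁ ∧ c₁ = c₂) ∨ (x₂ * a₂ = a₂ * x₂ ∧ b₁ = b₂) ∨
      x₁ * a₁ = a₂ * x₂) :
    IsAnnBCInv (a₁ * a₂) b₂ c₁ (x₂ * x₁) := by
  rcases h with ⟨hx, rfl⟩ | ⟨hx, rfl⟩ | hx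
  · exact h₁.mul_of_commute_left h₂ hx
  · exact h₁.mul_of_commute_right h₂ hx
  · exact h₁.mul_of_mul_eq_mul h₂ hx
end

section
/- Let R be a (not necessarily unital) associative ring, let a₁, a₂, b, c ∈ R and let n be a positive integer. If x is an annihilator (b,c)-inverse of (a₁·a₂)^{n+1}, then a₂·x·a₁ is an annihilator (a₂·b, c·a₁)-inverse of (a₂·a₁)^n. -/
section

variable {R : Type*} [NonUnitalRing R]

lemma mul_pw_mul (a b : R) (n : ℕ) : a * pw (b * a) n = pw (a * b) n * a := by
  induction n with
  | zero => simp only [pw, mul_assoc]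
  | succ n ih => simp only [pw, ← mul_assoc, ih]

lemma mul_pw_mul_mul (a b : R) (n : ℕ) : a * pw (b * a) n * b = pw (a * b) (n + 1) := by
  rw [mul_pw_mul, pw, mul_assoc]

lemma IsAnnBCInv.sandwich {u d v b c x : R} (h : IsAnnBCInv (u * d * v) b c x) :
    IsAnnBCInv d (v * b) (c * u) (v * x * u) := by
  obtain ⟨hxax, hxab, hcax, hb, hc⟩ := h
  refine ⟨?_, ?_, ?_, fun r hr => ?_, fun r hr => ?_⟩
  · calc v * x * u * d * (v * x * u) = v * (x * (u * d * v) * x) * u := by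
          simp only [mul_assoc]
      _ = v * x * u := by rw [hxax, mul_assoc]
  · calc v * x * u * d * (v * b) = v * (x * (u * d * v) * b) := by simp only [mul_assoc]
      _ = v * b := by rw [hxab]
  · calc c * u * d * (v * x * u) = c * (u * d * v) * x * u := by simp only [mul_assoc]
      _ = c * u := by rw [hcax]
  · have hrvx : r * v * x = 0 := hb (r * v) (by rwa [mul_assoc])
    rw [← mul_assoc, ← mul_assoc, hrvx, zero_mul]
  · have hxur : x * (u * r) = 0 := hc (u * r) (by rwa [← mul_assoc])
    rw [mul_assoc, mul_assoc, hxur, mul_zero]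

end

/-- Here `n = k + 1`: `pw (a₁*a₂) (k+1) = (a₁*a₂)^(n+1)` and `pw (a₂*a₁) k = (a₂*a₁)^n`. -/
theorem cline_formula_ann {R : Type*} [NonUnitalRing R] (a₁ a₂ b c x : R) (k : ℕ)
    (hx : IsAnnBCInv (pw (a₁ * a₂) (k + 1)) b c x) :
    IsAnnBCInv (pw (a₂ * a₁) k) (a₂ * b) (c * a₁) (a₂ * x * a₁) := by
  rw [← mul_pw_mul_mul] at hx
  exact hx.sandwich
end
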